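/- Let X be a reflexive Banach space and S, T : X ⇉ X* maximal monotone. Then 0 ∈ R(S + T) if and only if there exist representative functions f_S ∈ F_S and f_T ∈ F_T with dom f_S ∩ dom f̂_T ≠ ∅ such that f_S* □ f̂_T* is lower semicontinuous at (0, 0) and exact at (0, 0). -/

import Mathlib

noncomputable section

open scoped Topology Pointwise

variable {X : Type*} [NormedAddCommGroup X] [NormedSpace ℝ X]

/-- The topological dual of a real normed space. -/
abbrev Dd (X : Type*) [NormedAddCommGroup X] [NormedSpace ℝ X] := StrongDual ℝ X

/-- Convexity for extended-real-valued functions. -/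
def EConvexOn {E : Type*} [AddCommMonoid E] [Module ℝ E] (f : E → EReal) : Prop :=
  ∀ x y : E, ∀ a b : ℝ, 0 ≤ a → 0 ≤ b → a + b = 1 →
    f (a • x + b • y) ≤ (a : EReal) * f x + (b : EReal) * f y

/-- Monotonicity of a multivalued operator `T : X ⇉ X*`. -/
def IsMonotoneOp (T : X → Set (Dd X)) : Prop :=
  ∀ ⦃x y xs ys⦄, xs ∈ T x → ys ∈ T y → 0 ≤ (ys - xs) (y - x)

/-- Maximal monotonicity of a multivalued operator `T : X ⇉ X*`. -/
def IsMaxMonotone (T : X → Set (Dd X)) : Prop :=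
  IsMonotoneOp T ∧ ∀ x xs, (∀ y ys, ys ∈ T y → 0 ≤ (xs - ys) (x - y)) → xs ∈ T x

/-- Fenchel conjugate of a function on `X × X*`, evaluated on `X* × X`
(the space `X` identified with its image in `X**`). -/
def conj2 (F : X × Dd X → EReal) : Dd X × X → EReal :=
  fun p => ⨆ q : X × Dd X, ((p.1 q.1 + q.2 p.2 : ℝ) : EReal) - F q

/-- Fenchel conjugate of a function on `X`. -/
def conj1 (f : X → EReal) : Dd X → EReal :=
  fun xs => ⨆ x : X, ((xs x : ℝ) : EReal) - f x

/-- `F` is a representative function of `T`: convex, lower semicontinuous,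
everywhere above the duality product and coinciding with it on the graph of `T`. -/
def IsRepr (T : X → Set (Dd X)) (F : X × Dd X → EReal) : Prop :=
  EConvexOn F ∧ LowerSemicontinuous F ∧
  (∀ p : X × Dd X, ((p.2 p.1 : ℝ) : EReal) ≤ F p) ∧
  (∀ p : X × Dd X, p.2 ∈ T p.1 → F p = ((p.2 p.1 : ℝ) : EReal))

/-- `f̂(x, x*) = f(x, -x*)`. -/
def hatF (F : X × Dd X → EReal) : X × Dd X → EReal := fun p => F (p.1, -p.2)

/-- Effective domain. -/
def edom {E : Type*} (F : E → EReal) : Set E := {p | F p ≠ ⊤}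

/-- Infimal convolution. -/
def infConv {E : Type*} [AddCommGroup E] (g h : E → EReal) : E → EReal :=
  fun y => ⨅ u : E, g (y - u) + h u

/-- Exactness of the infimal convolution at a point. -/
def ExactAt {E : Type*} [AddCommGroup E] (g h : E → EReal) (y : E) : Prop :=
  ∃ u : E, infConv g h y = g (y - u) + h u

/-- Convex subdifferential of an extended-real-valued function (empty where the
value is not finite). -/
def esubdiff (h : X → EReal) (x : X) : Set (Dd X) :=
  {xs | h x ≠ ⊤ ∧ h x ≠ ⊥ ∧ ∀ y, h x + ((xs (y - x) : ℝ) : EReal) ≤ h y}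

/-- Reflexivity of a normed space. -/
def Reflexive' (X : Type*) [NormedAddCommGroup X] [NormedSpace ℝ X] : Prop :=
  Function.Surjective (NormedSpace.inclusionInDoubleDual ℝ X)

/-- The Fitzpatrick function of `T`. -/
def fitz (T : X → Set (Dd X)) : X × Dd X → EReal :=
  fun p => ⨆ q : {q : X × Dd X // q.2 ∈ T q.1},
    ((q.1.2 p.1 + p.2 q.1.1 - q.1.2 q.1.1 : ℝ) : EReal)

/-!
For a representative `F` of a maximal monotone `T`, convexity gives `fitz T ≤ F`, while
`fitz T (x, x*) ≤ F*(x*, x)` holds because `F` is the duality product on the graph; hence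
`F*(x*, x) ≥ ⟨x*, x⟩`, with equality exactly on the graph of `T`.

If `s ∈ S x` and `-s ∈ T x`, the continuous affine function `(y*, y) ↦ y*(x) + s(y)` minorizes
`f_S* □ f̂_T*` and meets it at `0` along the split `(s, x) + (-s, -x)`; this gives lower
semicontinuity and exactness at `0` for any representatives.

Conversely, if `f_S* □ f̂_T*` were positive at `0`, lower semicontinuity would separate `(0, 0)`
from `epi f_S* + epi f̂_T*`; the common domain point makes the hyperplane non-vertical, and
reflexivity turns it into an affine minorant `⟨(x, x*), ·⟩ + β` with `β > 0`. This is refuted by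
approximating `fitz S (x, x*) + fitz T (x, -x*) ≥ 0` from the graphs. Hence the value at `0` is
`≤ 0`, and an exact split `(u*, u)` forces `-u* ∈ S (-u)` and `u* ∈ T (-u)`.
-/

open Filter Set

section Separation

variable {E : Type*} [AddCommGroup E] [Module ℝ E] [TopologicalSpace E]
  [IsTopologicalAddGroup E] [ContinuousSMul ℝ E] [LocallyConvexSpace ℝ E]

theorem exists_affine_minorant_of_notMem_closure {C : Set (E × ℝ)} (hC : Convex ℝ C)
    (hup : ∀ z ∈ C, ∀ t, z.2 ≤ t → (z.1, t) ∈ C) (hne : C.Nonempty)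
    (φ₀ : StrongDual ℝ E) (k₀ : ℝ) (hφ₀ : ∀ z ∈ C, φ₀ z.1 + k₀ ≤ z.2)
    {w₀ : E} {c : ℝ} (hw₀ : (w₀, c) ∉ closure C) :
    ∃ (φ : StrongDual ℝ E) (k : ℝ), c < φ w₀ + k ∧ ∀ z ∈ C, φ z.1 + k ≤ z.2 := by
  obtain ⟨f, m, hfC, hmf⟩ :=
    geometric_hahn_banach_closed_point hC.closure isClosed_closure hw₀
  set ψ := f ∘L ContinuousLinearMap.inl ℝ E ℝ
  set r := f (0, 1)
  have hf : ∀ w t, f (w, t) = ψ w + t * r := fun w t => by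
    rw [show (w, t) = ((w, 0) : E × ℝ) + t • (0, 1) by simp, map_add, map_smul, smul_eq_mul]
    rfl
  have hr : r ≤ 0 := by
    by_contra! hr
    obtain ⟨z, hz⟩ := hne
    have := hfC _ (subset_closure (hup z hz (max z.2 ((m - ψ z.1) / r)) (le_max_left _ _)))
    rw [hf] at this
    have := le_max_right z.2 ((m - ψ z.1) / r)
    rw [div_le_iff₀ hr] at this
    nlinarith
  -- a possibly vertical separating hyperplane is tilted by adding the given minorant:
  -- `φ₀ + k₀ + μ (f - m) ≤ (1 - μ r) t` on `C`, then divide by `1 - μ r > 0`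
  set δ := f (w₀, c) - m
  have hδ : 0 < δ := sub_pos.2 hmf
  set μ := max 0 ((c - φ₀ w₀ - k₀) / δ) + 1
  have hμ : 0 < μ := by positivity
  have hμδ : c - φ₀ w₀ - k₀ < μ * δ := by
    rw [← div_lt_iff₀ hδ]
    linarith [le_max_right 0 ((c - φ₀ w₀ - k₀) / δ)]
  set ρ := 1 - μ * r
  have hρ : 0 < ρ := by nlinarith
  refine ⟨ρ⁻¹ • (φ₀ + μ • ψ), ρ⁻¹ * (k₀ - μ * m), ?_, fun z hz => ?_⟩
  · simp only [smul_apply, add_apply, smul_eq_mul, ← mul_add]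
    rw [lt_inv_mul_iff₀ hρ]
    have := hf w₀ c
    nlinarith
  · simp only [smul_apply, add_apply, smul_eq_mul, ← mul_add]
    rw [inv_mul_le_iff₀ hρ]
    have h1 := hfC z (subset_closure hz)
    rw [← Prod.mk.eta (p := z), hf] at h1
    nlinarith [hφ₀ z hz]

end Separation

section Fitzpatrick

variable {T : X → Set (Dd X)}

lemma dual_sub_apply_sub (ys bs : Dd X) (y b : X) :
    (ys - bs) (y - b) = ys y - ys b - bs y + bs b := by
  simp only [sub_apply, map_sub]; ring

lemma le_fitz {a : X} {as : Dd X} (ha : as ∈ T a) (p : X × Dd X) :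
    ((as p.1 + p.2 a - as a : ℝ) : EReal) ≤ fitz T p :=
  le_iSup (fun q : {q : X × Dd X // q.2 ∈ T q.1} =>
    ((q.1.2 p.1 + p.2 q.1.1 - q.1.2 q.1.1 : ℝ) : EReal)) ⟨(a, as), ha⟩

lemma exists_mem_lt_of_lt_fitz {p : X × Dd X} {c : ℝ} (h : (c : EReal) < fitz T p) :
    ∃ a as, as ∈ T a ∧ c < as p.1 + p.2 a - as a := by
  obtain ⟨⟨⟨a, as⟩, ha⟩, hlt⟩ := lt_iSup_iff.1 h
  exact ⟨a, as, ha, EReal.coe_lt_coe_iff.1 hlt⟩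

lemma IsMaxMonotone.mem_of_fitz_le (hT : IsMaxMonotone T) {p : X × Dd X}
    (h : fitz T p ≤ (p.2 p.1 : EReal)) : p.2 ∈ T p.1 := by
  refine hT.2 p.1 p.2 fun b bs hb => ?_
  have := EReal.coe_le_coe_iff.1 ((le_fitz hb p).trans h)
  rw [dual_sub_apply_sub]
  linarith

lemma IsMaxMonotone.coupling_le_fitz (hT : IsMaxMonotone T) (p : X × Dd X) :
    (p.2 p.1 : EReal) ≤ fitz T p := by
  by_contra! h
  simpa using (le_fitz (hT.mem_of_fitz_le h.le) p).trans_lt h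

lemma IsMonotoneOp.fitz_le_coupling (hT : IsMonotoneOp T) {p : X × Dd X} (hp : p.2 ∈ T p.1) :
    fitz T p ≤ (p.2 p.1 : EReal) := by
  refine iSup_le fun ⟨(a, as), ha⟩ => EReal.coe_le_coe_iff.2 ?_
  have := hT ha hp
  rw [dual_sub_apply_sub] at this
  dsimp only
  linarith

lemma econvexOn_fitz (T : X → Set (Dd X)) : EConvexOn (fitz T) := by
  intro x y a b ha hb hab
  refine iSup_le fun ⟨(c, cs), hc⟩ => ?_
  have hsplit : (cs (a • x + b • y).1 + (a • x + b • y).2 c - cs c : ℝ)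
      = a * (cs x.1 + x.2 c - cs c) + b * (cs y.1 + y.2 c - cs c) := by
    simp only [Prod.fst_add, Prod.snd_add, Prod.smul_fst, Prod.smul_snd, map_add, map_smul,
      add_apply, smul_apply, smul_eq_mul]
    linear_combination (cs c) * hab
  dsimp only
  rw [hsplit, EReal.coe_add, EReal.coe_mul, EReal.coe_mul]
  gcongr
  · exact le_fitz hc x
  · exact le_fitz hc y

lemma lowerSemicontinuous_fitz (T : X → Set (Dd X)) : LowerSemicontinuous (fitz T) :=
  lowerSemicontinuous_iSup fun q => continuous_coe_real_ereal.comp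
    (((q.1.2.continuous.comp continuous_fst).add
      ((ContinuousLinearMap.apply ℝ ℝ q.1.1).continuous.comp continuous_snd)).sub
      continuous_const) |>.lowerSemicontinuous

lemma isRepr_fitz (hT : IsMaxMonotone T) : IsRepr T (fitz T) :=
  ⟨econvexOn_fitz T, lowerSemicontinuous_fitz T, hT.coupling_le_fitz,
    fun p hp => le_antisymm (hT.1.fitz_le_coupling hp) (hT.coupling_le_fitz p)⟩

end Fitzpatrick

/-- The pairing of `X × X*` with `X* × X` in which `conj2` is the Fenchel conjugate. -/
def pairing (q : X × Dd X) : StrongDual ℝ (Dd X × X) :=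
  (ContinuousLinearMap.apply ℝ ℝ q.1).coprod q.2

@[simp]
lemma pairing_apply (q : X × Dd X) (p : Dd X × X) : pairing q p = p.1 q.1 + q.2 p.2 := rfl

lemma Reflexive'.exists_pairing_eq (hX : Reflexive' X) (φ : StrongDual ℝ (Dd X × X)) :
    ∃ q : X × Dd X, pairing q = φ := by
  obtain ⟨x, hx⟩ := hX (φ ∘L ContinuousLinearMap.inl ℝ (Dd X) X)
  refine ⟨(x, φ ∘L ContinuousLinearMap.inr ℝ (Dd X) X), ?_⟩
  conv_rhs => rw [← ContinuousLinearMap.coprod_comp_inl_inr φ, ← hx]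
  rfl

section Representative

variable {T : X → Set (Dd X)} {F : X × Dd X → EReal}

lemma IsRepr.ne_bot (hF : IsRepr T F) (p : X × Dd X) : F p ≠ ⊥ :=
  ne_bot_of_le_ne_bot (EReal.coe_ne_bot _) (hF.2.2.1 p)

lemma IsRepr.le_of_mem (hF : IsRepr T F) {a : X} {as : Dd X} (ha : as ∈ T a)
    (p : X × Dd X) : ((as p.1 + p.2 a - as a : ℝ) : EReal) ≤ F p := by
  induction hFp : F p using EReal.rec with
  | bot => exact absurd hFp (hF.ne_bot p)
  | top => exact le_top
  | coe r =>
    rw [EReal.coe_le_coe_iff]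
    set A := p.2 p.1
    set D := as p.1 + p.2 a - as a
    -- `F ≥ coupling` and convexity of `F` on the segment from `(a, as)` to `p`, divided by `t`
    have hseg : ∀ t ∈ Ioo (0 : ℝ) 1, t * A + (1 - t) * D ≤ r := by
      rintro t ⟨ht0, ht1⟩
      have hconv := (hF.2.2.1 _).trans (hF.1 p (a, as) t (1 - t) ht0.le (by linarith) (by ring))
      rw [hFp, hF.2.2.2 (a, as) ha] at hconv
      have hreal : t * t * A + t * (1 - t) * (p.2 a + as p.1) + (1 - t) * (1 - t) * as a
          ≤ t * r + (1 - t) * as a := by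
        convert EReal.coe_le_coe_iff.1 hconv using 1
        simp only [Prod.fst_add, Prod.snd_add, Prod.smul_fst, Prod.smul_snd, map_add, map_smul,
          add_apply, smul_apply, smul_eq_mul, A]
        ring
      refine le_of_mul_le_mul_left ?_ ht0
      linear_combination hreal
    have hlim : Tendsto (fun t : ℝ => t * A + (1 - t) * D) (𝓝[>] 0) (𝓝 D) := by
      have : Continuous fun t : ℝ => t * A + (1 - t) * D := by fun_prop
      simpa using (this.tendsto 0).mono_left nhdsWithin_le_nhds
    exact le_of_tendsto hlim (mem_of_superset (Ioo_mem_nhdsGT one_pos) hseg)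

lemma pairing_sub_le_conj2 (F : X × Dd X → EReal) (q : X × Dd X) (p : Dd X × X) :
    (pairing q p : EReal) - F q ≤ conj2 F p :=
  le_iSup (fun q : X × Dd X => ((p.1 q.1 + q.2 p.2 : ℝ) : EReal) - F q) q

lemma conj2_hatF (F : X × Dd X → EReal) (ys : Dd X) (y : X) :
    conj2 (hatF F) (ys, y) = conj2 F (ys, -y) := by
  refine le_antisymm (iSup_le fun q => ?_) (iSup_le fun q => ?_)
  · refine le_of_eq_of_le ?_ (pairing_sub_le_conj2 F (q.1, -q.2) (ys, -y))
    simp [hatF]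
  · refine le_of_eq_of_le ?_ (pairing_sub_le_conj2 (hatF F) (q.1, -q.2) (ys, y))
    simp [hatF]

lemma IsRepr.fitz_le_conj2 (hF : IsRepr T F) (ys : Dd X) (y : X) :
    fitz T (y, ys) ≤ conj2 F (ys, y) := by
  refine iSup_le fun ⟨(a, as), ha⟩ => le_of_eq_of_le ?_ (pairing_sub_le_conj2 F (a, as) (ys, y))
  rw [hF.2.2.2 (a, as) ha]
  simp [add_comm]

lemma IsRepr.conj2_le_of_mem (hF : IsRepr T F) {a : X} {as : Dd X} (ha : as ∈ T a) :
    conj2 F (as, a) ≤ (as a : EReal) := by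
  refine iSup_le fun q => EReal.sub_le_of_le_add' ?_
  have := add_le_add (hF.le_of_mem ha q) (le_refl (as a : EReal))
  rwa [← EReal.coe_add, sub_add_cancel] at this

lemma IsMaxMonotone.coupling_le_conj2 (hT : IsMaxMonotone T) (hF : IsRepr T F) (ys : Dd X)
    (y : X) : (ys y : EReal) ≤ conj2 F (ys, y) :=
  (hT.coupling_le_fitz (y, ys)).trans (hF.fitz_le_conj2 ys y)

lemma IsMaxMonotone.mem_of_conj2_le (hT : IsMaxMonotone T) (hF : IsRepr T F) {ys : Dd X}
    {y : X} (h : conj2 F (ys, y) ≤ (ys y : EReal)) : ys ∈ T y :=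
  hT.mem_of_fitz_le ((hF.fitz_le_conj2 ys y).trans h)

end Representative

section InfConvolution

variable {E : Type*}

def realEpigraph (f : E → EReal) : Set (E × ℝ) := {z | f z.1 ≤ z.2}

@[simp]
lemma mem_realEpigraph {f : E → EReal} {z : E × ℝ} : z ∈ realEpigraph f ↔ f z.1 ≤ z.2 := Iff.rfl

lemma convex_realEpigraph_iSup [AddCommGroup E] [Module ℝ E] {ι : Type*} (φ : ι → E →ₗ[ℝ] ℝ)
    (c : ι → EReal) : Convex ℝ (realEpigraph fun w => ⨆ i, (φ i w : EReal) - c i) := by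
  have : realEpigraph (fun w => ⨆ i, (φ i w : EReal) - c i)
      = ⋂ i, {z : E × ℝ | (φ i z.1 : EReal) - c i ≤ z.2} := by
    ext z; simp [realEpigraph]
  rw [this]
  refine convex_iInter fun i => ?_
  induction c i using EReal.rec with
  | bot => simpa using convex_empty
  | top => simpa [EReal.sub_top] using convex_univ
  | coe r =>
    have hlin : IsLinearMap ℝ fun z : E × ℝ => φ i z.1 - z.2 :=
      ⟨fun z z' => by simp only [Prod.fst_add, Prod.snd_add, map_add]; ring,
        fun a z => by simp only [Prod.smul_fst, Prod.smul_snd, map_smul, smul_eq_mul]; ring⟩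
    have hset : {z : E × ℝ | (φ i z.1 : EReal) - r ≤ z.2} = {z | φ i z.1 - z.2 ≤ r} := by
      ext z
      rw [mem_ofPred, mem_ofPred, ← EReal.coe_sub, EReal.coe_le_coe_iff, sub_le_comm]
    exact hset ▸ convex_halfSpace_le hlin r

lemma infConv_le_of_mem_add [AddCommGroup E] {g h : E → EReal} {z : E × ℝ}
    (hz : z ∈ realEpigraph g + realEpigraph h) : infConv g h z.1 ≤ z.2 := by
  obtain ⟨⟨v, t₁⟩, hv : g v ≤ t₁, ⟨u, t₂⟩, hu : h u ≤ t₂, rfl⟩ := hz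
  calc infConv g h (v + u) ≤ g (v + u - u) + h u := iInf_le _ u
    _ ≤ ((t₁ + t₂ : ℝ) : EReal) := by rw [add_sub_cancel_right]; exact add_le_add hv hu

lemma mem_realEpigraph_add_of_le [AddCommGroup E] {g h : E → EReal} {z : E × ℝ}
    (hz : z ∈ realEpigraph g + realEpigraph h) {t : ℝ} (ht : z.2 ≤ t) :
    (z.1, t) ∈ realEpigraph g + realEpigraph h := by
  obtain ⟨⟨v, t₁⟩, hv : g v ≤ t₁, ⟨u, t₂⟩, hu, rfl⟩ := hz
  refine ⟨(v, t - t₂), hv.trans ?_, (u, t₂), hu, by simp⟩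
  exact EReal.coe_le_coe_iff.2 (by simp only [Prod.snd_add] at ht; linarith)

lemma lowerSemicontinuousAt_of_le_of_eq {α β : Type*} [TopologicalSpace α] [LinearOrder β]
    [TopologicalSpace β] [OrderTopology β] {f ψ : α → β} {x : α} (hψ : ContinuousAt ψ x)
    (hle : ∀ y, ψ y ≤ f y) (heq : f x = ψ x) : LowerSemicontinuousAt f x := fun _ hc =>
  (hψ.eventually (lt_mem_nhds (heq ▸ hc))).mono fun y hy => hy.trans_le (hle y)

lemma EReal.le_neg_of_add_le_zero {a b : EReal} {r : ℝ} (h : a + b ≤ 0) (hb : (r : EReal) ≤ b) :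
    a ≤ ((-r : ℝ) : EReal) :=
  calc a = a + r - r := EReal.add_sub_cancel_right.symm
    _ ≤ 0 - r := EReal.sub_le_sub ((add_le_add le_rfl hb).trans h) le_rfl
    _ = ((-r : ℝ) : EReal) := by simp

end InfConvolution

section SumRange

variable {S T : X → Set (Dd X)} {FS FT : X × Dd X → EReal}

lemma convex_realEpigraph_conj2 (F : X × Dd X → EReal) : Convex ℝ (realEpigraph (conj2 F)) := by
  have hF : conj2 F = fun p => ⨆ q, ((pairing q : Dd X × X →ₗ[ℝ] ℝ) p : EReal) - F q := by
    ext p; simp [conj2]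
  exact hF ▸ convex_realEpigraph_iSup _ F

lemma pairing_sub_le_of_mem_realEpigraph_conj2 {F : X × Dd X → EReal} {q : X × Dd X}
    (hq : q ∈ edom F) (hbot : F q ≠ ⊥) {z : (Dd X × X) × ℝ} (hz : z ∈ realEpigraph (conj2 F)) :
    pairing q z.1 - (F q).toReal ≤ z.2 := by
  have := (pairing_sub_le_conj2 F q z.1).trans (mem_realEpigraph.1 hz)
  rwa [← EReal.coe_toReal hq hbot, ← EReal.coe_sub, EReal.coe_le_coe_iff] at this

lemma pairing_le_infConv (hFS : IsRepr S FS) (hFT : IsRepr T FT) {x : X} {s : Dd X}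
    (hs : s ∈ S x) (ht : -s ∈ T x) (p : Dd X × X) :
    (pairing (x, s) p : EReal) ≤ infConv (conj2 FS) (conj2 (hatF FT)) p := by
  refine le_iInf fun u => ?_
  have h₁ := pairing_sub_le_conj2 FS (x, s) (p - u)
  have h₂ := pairing_sub_le_conj2 (hatF FT) (x, s) u
  rw [hFS.2.2.2 (x, s) hs] at h₁
  rw [show hatF FT (x, s) = FT (x, -s) from rfl, hFT.2.2.2 (x, -s) ht] at h₂
  refine le_of_eq_of_le ?_ (add_le_add h₁ h₂)
  rw [← EReal.coe_sub, ← EReal.coe_sub, ← EReal.coe_add]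
  simp only [map_sub, pairing_apply, neg_apply]
  congr 1
  ring

lemma conj2_add_conj2_hatF_le_zero (hFS : IsRepr S FS) (hFT : IsRepr T FT) {x : X} {s : Dd X}
    (hs : s ∈ S x) (ht : -s ∈ T x) : conj2 FS (s, x) + conj2 (hatF FT) (-s, -x) ≤ 0 := by
  rw [conj2_hatF, neg_neg]
  refine (add_le_add (hFS.conj2_le_of_mem hs) (hFT.conj2_le_of_mem ht)).trans_eq ?_
  rw [← EReal.coe_add, neg_apply, add_neg_cancel, EReal.coe_zero]

lemma infConv_conj2_zero_eq_zero (hFS : IsRepr S FS) (hFT : IsRepr T FT) {x : X} {s : Dd X}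
    (hs : s ∈ S x) (ht : -s ∈ T x) :
    infConv (conj2 FS) (conj2 (hatF FT)) ((0 : Dd X), (0 : X)) = 0 := by
  refine le_antisymm ((iInf_le _ (-s, -x)).trans ?_) ?_
  · simpa using conj2_add_conj2_hatF_le_zero hFS hFT hs ht
  · simpa using pairing_le_infConv hFS hFT hs ht ((0 : Dd X), (0 : X))

lemma exactAt_conj2_zero (hFS : IsRepr S FS) (hFT : IsRepr T FT) {x : X} {s : Dd X}
    (hs : s ∈ S x) (ht : -s ∈ T x) :
    ExactAt (conj2 FS) (conj2 (hatF FT)) ((0 : Dd X), (0 : X)) := by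
  refine ⟨(-s, -x), le_antisymm (iInf_le _ _) ?_⟩
  rw [infConv_conj2_zero_eq_zero hFS hFT hs ht]
  simpa using conj2_add_conj2_hatF_le_zero hFS hFT hs ht

lemma lowerSemicontinuousAt_infConv_conj2 (hFS : IsRepr S FS) (hFT : IsRepr T FT) {x : X}
    {s : Dd X} (hs : s ∈ S x) (ht : -s ∈ T x) :
    LowerSemicontinuousAt (infConv (conj2 FS) (conj2 (hatF FT))) ((0 : Dd X), (0 : X)) :=
  lowerSemicontinuousAt_of_le_of_eq
    (continuous_coe_real_ereal.comp (pairing (x, s)).continuous).continuousAt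
    (pairing_le_infConv hFS hFT hs ht) (by simp [infConv_conj2_zero_eq_zero hFS hFT hs ht])

/-- Approximate `fitz S (x, x*)` and `fitz T (x, -x*)`, whose sum is at least `0`, by points of
the graphs of `S` and `T`. -/
lemma exists_mem_realEpigraph_add_lt (hS : IsMaxMonotone S) (hT : IsMaxMonotone T)
    (hFS : IsRepr S FS) (hFT : IsRepr T FT) (q : X × Dd X) {β : ℝ} (hβ : 0 < β) :
    ∃ z ∈ realEpigraph (conj2 FS) + realEpigraph (conj2 (hatF FT)), z.2 < pairing q z.1 + β := by
  obtain ⟨a, as, ha, hqa⟩ := exists_mem_lt_of_lt_fitz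
    ((EReal.coe_lt_coe_iff.2 (by linarith : q.2 q.1 - β / 2 < q.2 q.1)).trans_le
      (hS.coupling_le_fitz q))
  obtain ⟨b, bs, hb, hqb⟩ := exists_mem_lt_of_lt_fitz
    ((EReal.coe_lt_coe_iff.2 (by linarith : -q.2 q.1 - β / 2 < -q.2 q.1)).trans_le
      (hT.coupling_le_fitz (q.1, -q.2)))
  have hbT : conj2 (hatF FT) (bs, -b) ≤ (bs b : EReal) := by
    simpa only [conj2_hatF, neg_neg] using hFT.conj2_le_of_mem hb
  refine ⟨((as, a), as a) + ((bs, -b), bs b),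
    Set.add_mem_add (mem_realEpigraph.2 (hFS.conj2_le_of_mem ha)) (mem_realEpigraph.2 hbT), ?_⟩
  simp only [neg_apply] at hqb
  simp only [Prod.fst_add, Prod.snd_add, pairing_apply, map_add, map_neg]
  linarith

lemma infConv_conj2_zero_le_zero (hX : Reflexive' X) (hS : IsMaxMonotone S)
    (hT : IsMaxMonotone T) (hFS : IsRepr S FS) (hFT : IsRepr T FT) {q : X × Dd X}
    (hqS : q ∈ edom FS) (hqT : q ∈ edom (hatF FT))
    (hlsc : LowerSemicontinuousAt (infConv (conj2 FS) (conj2 (hatF FT))) ((0 : Dd X), (0 : X))) :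
    infConv (conj2 FS) (conj2 (hatF FT)) ((0 : Dd X), (0 : X)) ≤ 0 := by
  by_contra! h0
  obtain ⟨c, hc0, hc⟩ := EReal.exists_between_coe_real h0
  obtain ⟨U, hU, hUo, hU0⟩ := mem_nhds_iff.1 (hlsc c hc)
  set C := realEpigraph (conj2 FS) + realEpigraph (conj2 (hatF FT))
  have hC0 : (((0 : Dd X), (0 : X)), (0 : ℝ)) ∉ closure C := fun hmem => by
    obtain ⟨z, ⟨hzU, hzc : z.2 < c⟩, hzC⟩ :=
      mem_closure_iff.1 hmem _ (hUo.prod isOpen_Iio) ⟨hU0, EReal.coe_pos.1 hc0⟩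
    exact (hU hzU).not_ge ((infConv_le_of_mem_add hzC).trans (EReal.coe_le_coe_iff.2 hzc.le))
  have hmin : ∀ z ∈ C, pairing q z.1 + -((FS q).toReal + (hatF FT q).toReal) ≤ z.2 := by
    rintro _ ⟨⟨v, t₁⟩, hv, ⟨u, t₂⟩, hu, rfl⟩
    have h₁ := pairing_sub_le_of_mem_realEpigraph_conj2 hqS (hFS.ne_bot q) hv
    have h₂ := pairing_sub_le_of_mem_realEpigraph_conj2 hqT (hFT.ne_bot _) hu
    simp only [Prod.fst_add, Prod.snd_add, map_add] at h₁ h₂ ⊢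
    linarith
  obtain ⟨z, hz, -⟩ := exists_mem_realEpigraph_add_lt hS hT hFS hFT 0 one_pos
  obtain ⟨φ, k, hk, hφ⟩ := exists_affine_minorant_of_notMem_closure
    ((convex_realEpigraph_conj2 FS).add (convex_realEpigraph_conj2 (hatF FT)))
    (fun z hz t ht => mem_realEpigraph_add_of_le hz ht) ⟨z, hz⟩ _ _ hmin hC0
  obtain ⟨q', rfl⟩ := hX.exists_pairing_eq φ
  obtain ⟨z', hz', hlt⟩ := exists_mem_realEpigraph_add_lt hS hT hFS hFT q' (by simpa using hk)
  linarith [hφ z' hz']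

lemma mem_of_conj2_add_conj2_hatF_le_zero (hS : IsMaxMonotone S) (hT : IsMaxMonotone T)
    (hFS : IsRepr S FS) (hFT : IsRepr T FT) {u : Dd X × X}
    (h : conj2 FS (-u.1, -u.2) + conj2 (hatF FT) u ≤ 0) : -u.1 ∈ S (-u.2) ∧ u.1 ∈ T (-u.2) := by
  have hg := hS.coupling_le_conj2 hFS (-u.1) (-u.2)
  have hh := hT.coupling_le_conj2 hFT u.1 (-u.2)
  rw [← conj2_hatF] at hh
  refine ⟨hS.mem_of_conj2_le hFS ?_, hT.mem_of_conj2_le hFT ?_⟩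
  · simpa using EReal.le_neg_of_add_le_zero h hh
  · rw [← conj2_hatF]
    simpa using EReal.le_neg_of_add_le_zero ((add_comm _ _).trans_le h) hg

end SumRange

theorem zero_mem_range_sum_iff_general (hX : Reflexive' X)
    (S T : X → Set (Dd X)) (hS : IsMaxMonotone S) (hT : IsMaxMonotone T) :
    (∃ x : X, ∃ s ∈ S x, ∃ t ∈ T x, s + t = 0) ↔
    (∃ FS FT : X × Dd X → EReal, IsRepr S FS ∧ IsRepr T FT ∧
      (∃ q : X × Dd X, q ∈ edom FS ∧ q ∈ edom (hatF FT)) ∧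
      LowerSemicontinuousAt (infConv (conj2 FS) (conj2 (hatF FT))) ((0 : Dd X), (0 : X)) ∧
      ExactAt (conj2 FS) (conj2 (hatF FT)) ((0 : Dd X), (0 : X))) := by
  constructor
  · rintro ⟨x, s, hs, t, ht, hst⟩
    obtain rfl : t = -s := eq_neg_of_add_eq_zero_right hst
    have hFS := isRepr_fitz hS
    have hFT := isRepr_fitz hT
    have hdom : (x, s) ∈ edom (fitz S) ∧ (x, s) ∈ edom (hatF (fitz T)) :=
      ⟨by simp [edom, hFS.2.2.2 (x, s) hs], by simp [edom, hatF, hFT.2.2.2 (x, -s) ht]⟩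
    exact ⟨fitz S, fitz T, hFS, hFT, ⟨_, hdom⟩, lowerSemicontinuousAt_infConv_conj2 hFS hFT hs ht,
      exactAt_conj2_zero hFS hFT hs ht⟩
  · rintro ⟨FS, FT, hFS, hFT, ⟨q, hqS, hqT⟩, hlsc, u, hu⟩
    have h0 := infConv_conj2_zero_le_zero hX hS hT hFS hFT hqS hqT hlsc
    rw [hu, show ((0 : Dd X), (0 : X)) - u = (-u.1, -u.2) by ext <;> simp] at h0
    obtain ⟨hSu, hTu⟩ := mem_of_conj2_add_conj2_hatF_le_zero hS hT hFS hFT h0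
    exact ⟨-u.2, -u.1, hSu, u.1, hTu, neg_add_cancel u.1⟩

/-- `0 ∈ R(S + T)` iff `f_S* □ f̂_T*` is lsc and exact at `(0, 0)` for some
representative functions with intersecting domains. -/
theorem zero_mem_range_sum_iff [CompleteSpace X] (hX : Reflexive' X)
    (S T : X → Set (Dd X)) (hS : IsMaxMonotone S) (hT : IsMaxMonotone T) :
    (∃ x : X, ∃ s ∈ S x, ∃ t ∈ T x, s + t = 0) ↔
    (∃ FS FT : X × Dd X → EReal, IsRepr S FS ∧ IsRepr T FT ∧
      (∃ q : X × Dd X, q ∈ edom FS ∧ q ∈ edom (hatF FT)) ∧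
      LowerSemicontinuousAt (infConv (conj2 FS) (conj2 (hatF FT))) ((0 : Dd X), (0 : X)) ∧
      ExactAt (conj2 FS) (conj2 (hatF FT)) ((0 : Dd X), (0 : X))) :=
  zero_mem_range_sum_iff_general hX S T hS hT
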